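/- arXiv:2005.06905 — 2 statements merged into one kernel-verified Lean document; each statement's English description precedes it below -/
import Mathlib

section
/- As t ↑ T, λ_t·(2‖f_t‖² − 1) converges to log(T)/(2α−1) − 1/(2α−1)²; equivalently, 2‖f_t‖² − 1 = log(T)/((2α−1)λ_t) − 1/((2α−1)²λ_t) + o(1/λ_t). -/
open MeasureTheory Real Filter Topology

/-- `λ_t := |log(T−t)|/(2α−1)`. -/
noncomputable def lam (T α t : ℝ) : ℝ := |Real.log (T - t)| / (2 * α - 1)

/-- The kernel `f_t`. -/
noncomputable def fker (T α t : ℝ) (u v : ℝ) : ℝ :=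
  if u ∈ Set.Icc (0:ℝ) t ∧ v ∈ Set.Icc (0:ℝ) t then
    (1 / (2 * Real.sqrt (lam T α t))) * (T - max u v) ^ (α - 1) * (T - min u v) ^ (-α)
  else 0

/-- The kernel `g_t`. -/
noncomputable def gker (T α t : ℝ) (u v : ℝ) : ℝ :=
  if u ∈ Set.Icc (0:ℝ) t ∧ v ∈ Set.Icc (0:ℝ) t then
    (T - u) ^ (-α) * (T - v) ^ (-α) *
      ((T - max u v) ^ (2 * α - 1) - (T - t) ^ (2 * α - 1)) / |Real.log (T - t)|
  else 0

/-- `⟨p,q⟩ := ∫_{[0,T]²} p(u,v) q(u,v) du dv`. -/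
noncomputable def ip (T : ℝ) (p q : ℝ → ℝ → ℝ) : ℝ :=
  ∫ u in Set.Icc (0:ℝ) T, ∫ v in Set.Icc (0:ℝ) T, p u v * q u v

/-- `‖p‖² := ⟨p,p⟩`. -/
noncomputable def normSq (T : ℝ) (p : ℝ → ℝ → ℝ) : ℝ := ip T p p

/-- The contraction `(p ⊗₁ q)(x,y) := ∫₀^T p(x,u) q(y,u) du`. -/
noncomputable def contr (T : ℝ) (p q : ℝ → ℝ → ℝ) : ℝ → ℝ → ℝ :=
  fun x y => ∫ u in Set.Icc (0:ℝ) T, p x u * q y u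

/-- `b_t := (1/λ_t)·∫₀ᵗ ∫₀ˢ (T−s)^{2α−2}(T−u)^{−2α} du ds`. -/
noncomputable def bfun (T α t : ℝ) : ℝ :=
  (1 / lam T α t) *
    ∫ s in (0:ℝ)..t, ∫ u in (0:ℝ)..s, (T - s) ^ (2 * α - 2) * (T - u) ^ (-(2 * α))

/-- `A_{t,1}`. -/
noncomputable def A1 (T α t : ℝ) : ℝ :=
  (1 / (lam T α t) ^ 2) *
    ∫ x4 in (0:ℝ)..t, ∫ x3 in (0:ℝ)..x4, ∫ x2 in (0:ℝ)..x3, ∫ x1 in (0:ℝ)..x2,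
      (T - x4) ^ (2 * α - 2) * (T - x3) ^ (-1 : ℝ) * (T - x2) ^ (-1 : ℝ) *
        (T - x1) ^ (-(2 * α))

/-- `A_{t,2}`. -/
noncomputable def A2 (T α t : ℝ) : ℝ :=
  (1 / (2 * (lam T α t) ^ 2)) *
    ∫ x4 in (0:ℝ)..t, ∫ x2 in (0:ℝ)..x4, ∫ x3 in (0:ℝ)..x2, ∫ x1 in (0:ℝ)..x3,
      (T - x4) ^ (2 * α - 2) * (T - x2) ^ (2 * α - 2) * (T - x3) ^ (-(2 * α)) *
        (T - x1) ^ (-(2 * α))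

/-! With `β = 2α - 1` and `s = T - t`, the square of `f_t` is
`(4λ_t)⁻¹ (T - max)^(β-1) (T - min)^(-β-1)` on `[0,t]²`. This kernel integrates in closed form:
the inner integral splits at the diagonal into two power integrals, and the outer one gives
`‖f_t‖² = (4λ_t)⁻¹ (2 (log T - log s)/β - 2 (1 - (s/T)^β)/β²)`.
Since `λ_t = -log s / β`, the `log s` terms cancel exactly in `λ_t (2‖f_t‖² - 1)`, leaving
`log T/β - 1/β² + (s/T)^β/β²`, and `(s/T)^β → 0`. -/

open Set

section PowerIntegrals

variable {T a b : ℝ}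

lemma intervalIntegrable_sub_rpow (p : ℝ) (hab : a ≤ b) (hb : b < T) :
    IntervalIntegrable (fun v => (T - v) ^ p) volume a b := by
  refine (ContinuousOn.rpow_const (by fun_prop) fun v hv => Or.inl ?_).intervalIntegrable
  rw [uIcc_of_le hab] at hv
  linarith [hv.2]

lemma integral_sub_rpow {p : ℝ} (hp : p ≠ -1) (hab : a ≤ b) (hb : b < T) :
    ∫ v in a..b, (T - v) ^ p = ((T - a) ^ (p + 1) - (T - b) ^ (p + 1)) / (p + 1) := by
  rw [intervalIntegral.integral_comp_sub_left (fun x => x ^ p),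
    integral_rpow (Or.inr ⟨hp, fun h => ?_⟩)]
  rw [uIcc_of_le (by linarith)] at h
  linarith [h.1]

lemma integral_sub_inv (hab : a ≤ b) (hb : b < T) :
    ∫ v in a..b, (T - v)⁻¹ = log (T - a) - log (T - b) := by
  rw [intervalIntegral.integral_comp_sub_left (fun x => x⁻¹),
    integral_inv_of_pos (by linarith) (by linarith), log_div (by linarith) (by linarith)]

end PowerIntegrals

noncomputable def powKernel (T β u v : ℝ) : ℝ :=
  (T - max u v) ^ (β - 1) * (T - min u v) ^ (-β - 1)

section PowKernel

variable {T β t : ℝ}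

lemma integral_powKernel_apply {u : ℝ} (hβ : β ≠ 0) (hu : u ∈ Icc 0 t) (ht : t < T) :
    ∫ v in 0..t, powKernel T β u v =
      (2 * (T - u)⁻¹ - T ^ (-β) * (T - u) ^ (β - 1) - (T - t) ^ β * (T - u) ^ (-β - 1)) /
        β := by
  have hu' : 0 < T - u := by linarith [hu.2]
  have below : ∫ v in 0..u, powKernel T β u v =
      (T - u) ^ (β - 1) * ((T ^ (-β) - (T - u) ^ (-β)) / -β) := by
    rw [intervalIntegral.integral_congr (g := fun v => (T - u) ^ (β - 1) * (T - v) ^ (-β - 1))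
        fun v hv => by
          rw [uIcc_of_le hu.1] at hv
          simp only [powKernel, max_eq_left hv.2, min_eq_right hv.2],
      intervalIntegral.integral_const_mul,
      integral_sub_rpow (by contrapose! hβ; linarith) hu.1 (by linarith), sub_zero,
      show -β - 1 + 1 = -β by ring]
  have above : ∫ v in u..t, powKernel T β u v =
      (T - u) ^ (-β - 1) * (((T - u) ^ β - (T - t) ^ β) / β) := by
    rw [intervalIntegral.integral_congr (g := fun v => (T - u) ^ (-β - 1) * (T - v) ^ (β - 1))
        fun v hv => by
          rw [uIcc_of_le hu.2] at hv
          simp only [powKernel, max_eq_right hv.1, min_eq_left hv.1, mul_comm],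
      intervalIntegral.integral_const_mul, integral_sub_rpow (by contrapose! hβ; linarith) hu.2 ht,
      show β - 1 + 1 = β by ring]
  have hint : IntervalIntegrable (powKernel T β u) volume 0 t := by
    refine ContinuousOn.intervalIntegrable fun v hv => ?_
    rw [uIcc_of_le (hu.1.trans hu.2)] at hv
    have hmax : 0 < T - max u v := by linarith [max_le hu.2 hv.2]
    have hmin : 0 < T - min u v := by linarith [(min_le_left u v).trans hu.2]
    exact ((ContinuousAt.rpow_const (f := fun v => T - max u v) (by fun_prop)
      (Or.inl hmax.ne')).mul (ContinuousAt.rpow_const (f := fun v => T - min u v) (by fun_prop)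
        (Or.inl hmin.ne'))).continuousWithinAt
  have huI : u ∈ uIcc 0 t := Icc_subset_uIcc hu
  rw [← intervalIntegral.integral_add_adjacent_intervals
    (hint.mono_set (uIcc_subset_uIcc left_mem_uIcc huI))
    (hint.mono_set (uIcc_subset_uIcc huI right_mem_uIcc)), below, above]
  have e1 : (T - u) ^ (β - 1) * (T - u) ^ (-β) = (T - u)⁻¹ := by
    rw [← rpow_add hu', ← rpow_neg_one]; ring_nf
  have e2 : (T - u) ^ (-β - 1) * (T - u) ^ β = (T - u)⁻¹ := by
    rw [← rpow_add hu', ← rpow_neg_one]; ring_nf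
  rw [div_neg]
  linear_combination (1 / β) * e1 + (1 / β) * e2

lemma integral_integral_powKernel (hβ : β ≠ 0) (ht0 : 0 ≤ t) (ht : t < T) :
    ∫ u in 0..t, ∫ v in 0..t, powKernel T β u v =
      2 * (log T - log (T - t)) / β - 2 * (1 - (T - t) ^ β * T ^ (-β)) / β ^ 2 := by
  have hT : 0 < T := by linarith
  have hs : 0 < T - t := by linarith
  have hinv : IntervalIntegrable (fun u => (T - u)⁻¹) volume 0 t := by
    simpa only [rpow_neg_one] using intervalIntegrable_sub_rpow (-1) ht0 ht
  have hpow (p : ℝ) := intervalIntegrable_sub_rpow p ht0 ht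
  rw [intervalIntegral.integral_congr fun u hu =>
      integral_powKernel_apply hβ (uIcc_of_le ht0 ▸ hu) ht, intervalIntegral.integral_div,
    intervalIntegral.integral_sub ((hinv.const_mul 2).sub ((hpow _).const_mul _))
      ((hpow _).const_mul _),
    intervalIntegral.integral_sub (hinv.const_mul 2) ((hpow _).const_mul _),
    intervalIntegral.integral_const_mul, intervalIntegral.integral_const_mul,
    intervalIntegral.integral_const_mul, integral_sub_inv ht0 ht,
    integral_sub_rpow (by contrapose! hβ; linarith) ht0 ht,
    integral_sub_rpow (by contrapose! hβ; linarith) ht0 ht, sub_zero,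
    show β - 1 + 1 = β by ring, show -β - 1 + 1 = -β by ring]
  have e1 : T ^ (-β) * T ^ β = 1 := by rw [← rpow_add hT]; simp
  have e2 : (T - t) ^ β * (T - t) ^ (-β) = 1 := by rw [← rpow_add hs]; simp
  field_simp
  linear_combination -e1 - e2

end PowKernel

lemma setIntegral_Icc_indicator {a b c : ℝ} (hab : a ≤ b) (hbc : b ≤ c) (g : ℝ → ℝ) :
    ∫ x in Icc a c, (Icc a b).indicator g x = ∫ x in a..b, g x := by
  rw [setIntegral_indicator measurableSet_Icc, inter_eq_self_of_subset_right
    (Icc_subset_Icc le_rfl hbc), integral_Icc_eq_integral_Ioc,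
    intervalIntegral.integral_of_le hab]

lemma setIntegral_Icc_Icc_ite {a b c : ℝ} (hab : a ≤ b) (hbc : b ≤ c)
    (h : ℝ → ℝ → ℝ) :
    ∫ u in Icc a c, ∫ v in Icc a c, (if u ∈ Icc a b ∧ v ∈ Icc a b then h u v else 0) =
      ∫ u in a..b, ∫ v in a..b, h u v := by
  have : (fun u => ∫ v in Icc a c, if u ∈ Icc a b ∧ v ∈ Icc a b then h u v else 0) =
      (Icc a b).indicator fun u => ∫ v in Icc a c, (Icc a b).indicator (h u) v := by
    ext u
    by_cases hu : u ∈ Icc a b <;> simp [hu, indicator]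
  simp_rw [this, setIntegral_Icc_indicator hab hbc]

lemma fker_mul_self {T α t : ℝ} (hα : 1 / 2 < α) (ht : t < T) (u v : ℝ) :
    fker T α t u v * fker T α t u v =
      if u ∈ Icc 0 t ∧ v ∈ Icc 0 t then (4 * lam T α t)⁻¹ * powKernel T (2 * α - 1) u v
      else 0 := by
  unfold fker
  split_ifs with huv
  · have hmax : 0 < T - max u v := by linarith [max_le huv.1.2 huv.2.2]
    have hmin : 0 < T - min u v := by linarith [(min_le_left u v).trans huv.1.2]
    have hlam : 0 ≤ lam T α t := div_nonneg (abs_nonneg _) (by linarith)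
    have e1 := rpow_add hmax (α - 1) (α - 1)
    have e2 := rpow_add hmin (-α) (-α)
    rw [powKernel, show 2 * α - 1 - 1 = α - 1 + (α - 1) by ring,
      show -(2 * α - 1) - 1 = -α + -α by ring, e1, e2]
    field_simp
    rw [sq_sqrt hlam]
    ring
  · simp

lemma normSq_fker {T α t : ℝ} (hα : 1 / 2 < α) (ht0 : 0 ≤ t) (ht : t < T) :
    normSq T (fker T α t) =
      (4 * lam T α t)⁻¹ * ∫ u in 0..t, ∫ v in 0..t, powKernel T (2 * α - 1) u v := by
  simp_rw [normSq, ip, fker_mul_self hα ht, setIntegral_Icc_Icc_ite ht0 ht.le,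
    intervalIntegral.integral_const_mul]

lemma lam_mul_two_normSq_fker_sub_one {T α t : ℝ} (hα : 1 / 2 < α) (ht0 : 0 ≤ t) (ht : t < T)
    (ht1 : T - t < 1) :
    lam T α t * (2 * normSq T (fker T α t) - 1) =
      log T / (2 * α - 1) - 1 / (2 * α - 1) ^ 2 +
        (T - t) ^ (2 * α - 1) * T ^ (-(2 * α - 1)) / (2 * α - 1) ^ 2 := by
  have hβ : 2 * α - 1 ≠ 0 := by linarith
  have hlog : log (T - t) < 0 := log_neg (by linarith) ht1
  rw [normSq_fker hα ht0 ht, integral_integral_powKernel hβ ht0 ht, lam, abs_of_neg hlog]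
  field_simp [hlog.ne]
  ring

theorem stmt_1 (T α : ℝ) (hT : 0 < T) (hα : 1 / 2 < α) :
    Tendsto (fun t => lam T α t * (2 * normSq T (fker T α t) - 1))
      (𝓝[<] T) (𝓝 (Real.log T / (2 * α - 1) - 1 / (2 * α - 1) ^ 2)) := by
  have hβ : 0 < 2 * α - 1 := by linarith
  have hclosed : (fun t => lam T α t * (2 * normSq T (fker T α t) - 1)) =ᶠ[𝓝[<] T]
      fun t => log T / (2 * α - 1) - 1 / (2 * α - 1) ^ 2 +
        (T - t) ^ (2 * α - 1) * T ^ (-(2 * α - 1)) / (2 * α - 1) ^ 2 := by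
    filter_upwards [Ioo_mem_nhdsLT (max_lt hT (sub_lt_self T one_pos))] with t ht
    exact lam_mul_two_normSq_fker_sub_one hα ((le_max_left _ _).trans ht.1.le) ht.2
      (by linarith [(le_max_right 0 (T - 1)).trans_lt ht.1])
  rw [tendsto_congr' hclosed]
  have hcont : Continuous fun t => log T / (2 * α - 1) - 1 / (2 * α - 1) ^ 2 +
      (T - t) ^ (2 * α - 1) * T ^ (-(2 * α - 1)) / (2 * α - 1) ^ 2 := by
    have := (continuous_sub_left T).rpow_const (p := 2 * α - 1) fun _ => Or.inr hβ.le
    fun_prop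
  simpa [zero_rpow hβ.ne'] using (hcont.tendsto T).mono_left nhdsWithin_le_nhds
end

section
/- There exists a constant C > 0, depending only on α and T, such that for every t with max(0, T − 1/e) < t < T one has ‖f_t ⊗₁ g_t‖ ≤ C/λ_t. -/
open MeasureTheory Real Filter Topology

/-! With `a = T - x`, `b = T - u`, `c = T - y`, the bound `min(c,b)^(2α-1) ≤ b^(2α-1-τ) c^τ`
dominates `f_t(x,u) g_t(y,u)` by `c^(τ-α)` times `min(a,b)^(α-1) max(a,b)^(-α) b^(α-1-τ)`, whose
integral in `b` is `O(a^(α-1-τ))`; the small power `τ` replaces the logarithm that the exact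
integral would produce. Taking `τ = δ` or `τ = 2α-1-δ` according to the order of `x` and `y` gives
`(f_t ⊗₁ g_t)(x,y) ≲ (√λ_t |log(T-t)|)⁻¹ min(a,c)^(α-1-δ) max(a,c)^(δ-α)`, whose square integrates
in `y` to `O((T-x)⁻¹)`. The last integral in `x` costs only `log T - log(T-t) = O(|log(T-t)|)`,
so `‖f_t ⊗₁ g_t‖² = O(1/(λ_t |log(T-t)|)) = O(λ_t⁻²)`. -/

open Set

section PowerBounds

variable {a b c p q β τ A B S : ℝ}

theorem min_rpow_le_rpow_mul_rpow (hb : 0 < b) (hc : 0 < c) (hτ : 0 ≤ τ) (hτβ : τ ≤ β) :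
    min b c ^ β ≤ b ^ (β - τ) * c ^ τ := by
  rcases le_total b c with h | h
  · rw [min_eq_left h]
    calc b ^ β = b ^ (β - τ) * b ^ τ := by rw [← rpow_add hb, sub_add_cancel]
      _ ≤ b ^ (β - τ) * c ^ τ := by gcongr
  · rw [min_eq_right h]
    calc c ^ β = c ^ (β - τ) * c ^ τ := by rw [← rpow_add hc, sub_add_cancel]
      _ ≤ b ^ (β - τ) * c ^ τ := by gcongr

theorem intervalIntegrable_and_integral_le_of_eqOn_rpow {h : ℝ → ℝ} (ha : 0 < a) (haS : a ≤ S)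
    (hp : -1 < p) (hq : q < -1) (hB : 0 ≤ B)
    (h₁ : EqOn h (fun b => A * b ^ p) (Ioc 0 a)) (h₂ : EqOn h (fun b => B * b ^ q) (Ioc a S)) :
    IntervalIntegrable h volume 0 S ∧
      ∫ b in 0..S, h b ≤ A * a ^ (p + 1) / (p + 1) + B * a ^ (q + 1) / -(q + 1) := by
  rw [← uIoc_of_le ha.le] at h₁
  rw [← uIoc_of_le haS] at h₂
  have h0 : (0 : ℝ) ∉ uIcc a S := by
    rw [uIcc_of_le haS]
    exact fun h => ha.not_ge h.1
  have i₁ : IntervalIntegrable h volume 0 a :=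
    ((intervalIntegral.intervalIntegrable_rpow' hp).const_mul A).congr h₁.symm
  have i₂ : IntervalIntegrable h volume a S :=
    ((intervalIntegral.intervalIntegrable_rpow (Or.inr h0)).const_mul B).congr h₂.symm
  refine ⟨i₁.trans i₂, ?_⟩
  have tail : (S ^ (q + 1) - a ^ (q + 1)) / (q + 1) ≤ a ^ (q + 1) / -(q + 1) := by
    rw [← neg_div_neg_eq, neg_sub]
    gcongr <;> linarith [rpow_nonneg (ha.le.trans haS) (q + 1)]
  rw [← intervalIntegral.integral_add_adjacent_intervals i₁ i₂,
    intervalIntegral.integral_congr_ae (ae_of_all _ h₁),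
    intervalIntegral.integral_congr_ae (ae_of_all _ h₂),
    intervalIntegral.integral_const_mul, intervalIntegral.integral_const_mul,
    integral_rpow (Or.inl hp), integral_rpow (Or.inr ⟨hq.ne, h0⟩), zero_rpow (by linarith),
    sub_zero, mul_div_assoc, mul_div_assoc]
  gcongr

theorem intervalIntegrable_and_integral_min_max_rpow_le {α : ℝ} (ha : 0 < a) (haS : a ≤ S)
    (hτ : 0 < τ) (hτα : τ < 2 * α - 1) :
    IntervalIntegrable (fun b => min a b ^ (α - 1) * max a b ^ (-α) * b ^ (α - 1 - τ))
        volume 0 S ∧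
      ∫ b in 0..S, min a b ^ (α - 1) * max a b ^ (-α) * b ^ (α - 1 - τ) ≤
        (1 / (2 * α - 1 - τ) + 1 / τ) * a ^ (α - 1 - τ) := by
  have h₁ : EqOn (fun b => min a b ^ (α - 1) * max a b ^ (-α) * b ^ (α - 1 - τ))
      (fun b => a ^ (-α) * b ^ (2 * α - 2 - τ)) (Ioc 0 a) := fun b hb => by
    simp only [min_eq_right hb.2, max_eq_left hb.2]
    rw [show 2 * α - 2 - τ = (α - 1) + (α - 1 - τ) by ring, rpow_add hb.1]
    ring
  have h₂ : EqOn (fun b => min a b ^ (α - 1) * max a b ^ (-α) * b ^ (α - 1 - τ))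
      (fun b => a ^ (α - 1) * b ^ (-1 - τ)) (Ioc a S) := fun b hb => by
    simp only [min_eq_left hb.1.le, max_eq_right hb.1.le]
    rw [show -1 - τ = -α + (α - 1 - τ) by ring, rpow_add (ha.trans hb.1)]
    ring
  obtain ⟨hint, hle⟩ := intervalIntegrable_and_integral_le_of_eqOn_rpow ha haS
    (by linarith) (by linarith) (rpow_nonneg ha.le _) h₁ h₂
  refine ⟨hint, hle.trans_eq ?_⟩
  have e₁ : a ^ (-α) * a ^ (2 * α - 2 - τ + 1) = a ^ (α - 1 - τ) := by
    rw [← rpow_add ha]; congr 1; ring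
  have e₂ : a ^ (α - 1) * a ^ (-1 - τ + 1) = a ^ (α - 1 - τ) := by
    rw [← rpow_add ha]; congr 1; ring
  rw [e₁, e₂, show 2 * α - 2 - τ + 1 = 2 * α - 1 - τ by ring, show -(-1 - τ + 1) = τ by ring]
  ring

theorem rpow_mul_rpow_mul_min_rpow_sub_le {α ε : ℝ} (hb : 0 < b) (hc : 0 < c) (hε : 0 ≤ ε)
    (hτ : 0 ≤ τ) (hτα : τ ≤ 2 * α - 1) :
    c ^ (-α) * b ^ (-α) * (min c b ^ (2 * α - 1) - ε ^ (2 * α - 1)) ≤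
      c ^ (τ - α) * b ^ (α - 1 - τ) := by
  have hmin : min c b ^ (2 * α - 1) ≤ b ^ (2 * α - 1 - τ) * c ^ τ := by
    rw [min_comm]
    exact min_rpow_le_rpow_mul_rpow hb hc hτ hτα
  calc c ^ (-α) * b ^ (-α) * (min c b ^ (2 * α - 1) - ε ^ (2 * α - 1))
      ≤ c ^ (-α) * b ^ (-α) * (b ^ (2 * α - 1 - τ) * c ^ τ) := by
        gcongr
        linarith [rpow_nonneg hε (2 * α - 1)]
    _ = c ^ (τ - α) * b ^ (α - 1 - τ) := by
        rw [sub_eq_neg_add τ, rpow_add hc, show α - 1 - τ = -α + (2 * α - 1 - τ) by ring,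
          rpow_add hb]
        ring

end PowerBounds

section Contraction

variable {T α t x y u τ δ : ℝ}

theorem fker_nonneg (htT : t < T) (x u : ℝ) : 0 ≤ fker T α t x u := by
  unfold fker
  split_ifs with h
  · have : 0 < T - max x u := by linarith [max_le h.1.2 h.2.2]
    have : 0 < T - min x u := by linarith [min_le_left x u, h.1.2]
    positivity
  · exact le_rfl

theorem gker_nonneg (hα : 1 / 2 < α) (htT : t < T) (y u : ℝ) : 0 ≤ gker T α t y u := by
  unfold gker
  split_ifs with h
  · have : 0 < T - y := by linarith [h.1.2]
    have : 0 < T - u := by linarith [h.2.2]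
    have : (T - t) ^ (2 * α - 1) ≤ (T - max y u) ^ (2 * α - 1) := by
      gcongr <;> linarith [max_le h.1.2 h.2.2]
    have : 0 ≤ (T - max y u) ^ (2 * α - 1) - (T - t) ^ (2 * α - 1) := by linarith
    positivity
  · exact le_rfl

theorem contr_nonneg (hα : 1 / 2 < α) (htT : t < T) (x y : ℝ) :
    0 ≤ contr T (fker T α t) (gker T α t) x y :=
  integral_nonneg fun u => mul_nonneg (fker_nonneg htT x u) (gker_nonneg hα htT y u)

theorem contr_eq_zero_of_left_notMem (hx : x ∉ Icc 0 t) (y : ℝ) :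
    contr T (fker T α t) (gker T α t) x y = 0 := by
  simp [contr, fker, hx]

theorem contr_eq_zero_of_right_notMem (x : ℝ) (hy : y ∉ Icc 0 t) :
    contr T (fker T α t) (gker T α t) x y = 0 := by
  simp [contr, gker, hy]

theorem fker_mul_gker_le (htT : t < T) (hτ : 0 ≤ τ) (hτα : τ ≤ 2 * α - 1) (hx : x ∈ Icc 0 t)
    (hy : y ∈ Icc 0 t) (hu : u ≤ T) :
    fker T α t x u * gker T α t y u ≤
      (T - y) ^ (τ - α) / (2 * √(lam T α t) * |log (T - t)|) *
        (min (T - x) (T - u) ^ (α - 1) * max (T - x) (T - u) ^ (-α) * (T - u) ^ (α - 1 - τ)) := by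
  have ha : 0 < T - x := by linarith [hx.2]
  have hc : 0 < T - y := by linarith [hy.2]
  by_cases hu' : u ∈ Icc 0 t
  · have hb : 0 < T - u := by linarith [hu'.2]
    rw [fker, gker, if_pos ⟨hx, hu'⟩, if_pos ⟨hy, hu'⟩, ← min_sub_sub_left, ← max_sub_sub_left,
      ← min_sub_sub_left]
    calc 1 / (2 * √(lam T α t)) * min (T - x) (T - u) ^ (α - 1) * max (T - x) (T - u) ^ (-α) *
          ((T - y) ^ (-α) * (T - u) ^ (-α) *
            (min (T - y) (T - u) ^ (2 * α - 1) - (T - t) ^ (2 * α - 1)) / |log (T - t)|)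
        ≤ 1 / (2 * √(lam T α t)) * min (T - x) (T - u) ^ (α - 1) * max (T - x) (T - u) ^ (-α) *
          ((T - y) ^ (τ - α) * (T - u) ^ (α - 1 - τ) / |log (T - t)|) := by
          gcongr _ * (?_ / _)
          exact rpow_mul_rpow_mul_min_rpow_sub_le hb hc (sub_nonneg.2 htT.le) hτ hτα
      _ = _ := by ring
  · have hb : 0 ≤ T - u := by linarith
    rw [fker, if_neg fun h => hu' h.2, zero_mul]
    positivity

theorem contr_le_rpow_mul_rpow (hα : 1 / 2 < α) (htT : t < T) (hτ : 0 < τ)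
    (hτα : τ < 2 * α - 1) (hx : x ∈ Icc 0 t) (hy : y ∈ Icc 0 t) :
    contr T (fker T α t) (gker T α t) x y ≤
      (1 / (2 * α - 1 - τ) + 1 / τ) / (2 * √(lam T α t) * |log (T - t)|) *
        ((T - x) ^ (α - 1 - τ) * (T - y) ^ (τ - α)) := by
  have hT : 0 ≤ T := by linarith [hx.1, hx.2]
  have ha : 0 < T - x := by linarith [hx.2]
  set r := (T - y) ^ (τ - α) / (2 * √(lam T α t) * |log (T - t)|)
  set k := fun b => min (T - x) b ^ (α - 1) * max (T - x) b ^ (-α) * b ^ (α - 1 - τ)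
  obtain ⟨hk, hk_le⟩ :=
    intervalIntegrable_and_integral_min_max_rpow_le ha (sub_le_self T hx.1) hτ hτα
  have hr : 0 ≤ r := div_nonneg (rpow_nonneg (by linarith [hy.2]) _) (by positivity)
  have hk' : IntegrableOn (fun u => r * k (T - u)) (Icc 0 T) := by
    rw [← intervalIntegrable_iff_integrableOn_Icc_of_le hT]
    simpa using ((hk.comp_sub_left T).symm).const_mul r
  calc contr T (fker T α t) (gker T α t) x y ≤ ∫ u in Icc 0 T, r * k (T - u) :=
        integral_mono_of_nonneg
          (ae_of_all _ fun u => mul_nonneg (fker_nonneg htT x u) (gker_nonneg hα htT y u)) hk'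
          (ae_restrict_of_forall_mem measurableSet_Icc fun u hu =>
            fker_mul_gker_le htT hτ.le hτα.le hx hy hu.2)
    _ = r * ∫ b in 0..T, k b := by
        rw [integral_Icc_eq_integral_Ioc, ← intervalIntegral.integral_of_le hT,
          intervalIntegral.integral_const_mul, intervalIntegral.integral_comp_sub_left, sub_self,
          sub_zero]
    _ ≤ r * ((1 / (2 * α - 1 - τ) + 1 / τ) * (T - x) ^ (α - 1 - τ)) := by gcongr
    _ = _ := by ring

theorem contr_le_min_rpow_mul_max_rpow (hα : 1 / 2 < α) (htT : t < T) (hδ : 0 < δ)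
    (hδα : δ < 2 * α - 1) (hx : x ∈ Icc 0 t) (hy : y ∈ Icc 0 t) :
    contr T (fker T α t) (gker T α t) x y ≤
      (1 / (2 * α - 1 - δ) + 1 / δ) / (2 * √(lam T α t) * |log (T - t)|) *
        (min (T - x) (T - y) ^ (α - 1 - δ) * max (T - x) (T - y) ^ (δ - α)) := by
  rcases le_total x y with hxy | hyx
  · have h := contr_le_rpow_mul_rpow hα htT (τ := 2 * α - 1 - δ) (by linarith) (by linarith) hx hy
    rw [show α - 1 - (2 * α - 1 - δ) = δ - α by ring, show 2 * α - 1 - δ - α = α - 1 - δ by ring,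
      show 2 * α - 1 - (2 * α - 1 - δ) = δ by ring] at h
    rw [min_eq_right (by linarith), max_eq_left (by linarith)]
    exact h.trans_eq (by ring)
  · rw [min_eq_left (by linarith), max_eq_right (by linarith)]
    exact contr_le_rpow_mul_rpow hα htT hδ hδα hx hy

theorem integral_contr_mul_self_le (hα : 1 / 2 < α) (htT : t < T) (hδ : 0 < δ)
    (hδα : 2 * δ < 2 * α - 1) (hx : x ∈ Icc 0 t) :
    ∫ y in Icc 0 T, contr T (fker T α t) (gker T α t) x y * contr T (fker T α t) (gker T α t) x y ≤
      ((1 / (2 * α - 1 - δ) + 1 / δ) / (2 * √(lam T α t) * |log (T - t)|)) ^ 2 *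
        (2 / (2 * α - 1 - 2 * δ)) * (T - x)⁻¹ := by
  have hT : 0 ≤ T := by linarith [hx.1, hx.2]
  have ha : 0 < T - x := by linarith [hx.2]
  set R := (1 / (2 * α - 1 - δ) + 1 / δ) / (2 * √(lam T α t) * |log (T - t)|)
  set a := T - x
  set w := fun c => R * (min a c ^ (α - 1 - δ) * max a c ^ (δ - α))
  have hw : ∀ y ∈ Icc 0 T, contr T (fker T α t) (gker T α t) x y *
      contr T (fker T α t) (gker T α t) x y ≤ w (T - y) * w (T - y) := fun y _ => by
    by_cases hy : y ∈ Icc 0 t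
    · exact mul_self_le_mul_self (contr_nonneg hα htT x y)
        (contr_le_min_rpow_mul_max_rpow hα htT hδ (by linarith) hx hy)
    · rw [contr_eq_zero_of_right_notMem x hy, mul_zero]
      exact mul_self_nonneg _
  have h₁ : EqOn (fun c => w c * w c) (fun c => R ^ 2 * a ^ (2 * (δ - α)) * c ^ (2 * (α - 1 - δ)))
      (Ioc 0 a) := fun c hc => by
    simp only [w, min_eq_right hc.2, max_eq_left hc.2]
    rw [two_mul (δ - α), two_mul (α - 1 - δ), rpow_add ha, rpow_add hc.1]
    ring
  have h₂ : EqOn (fun c => w c * w c) (fun c => R ^ 2 * a ^ (2 * (α - 1 - δ)) * c ^ (2 * (δ - α)))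
      (Ioc a T) := fun c hc => by
    simp only [w, min_eq_left hc.1.le, max_eq_right hc.1.le]
    rw [two_mul (δ - α), two_mul (α - 1 - δ), rpow_add ha, rpow_add (ha.trans hc.1)]
    ring
  obtain ⟨hint, hle⟩ := intervalIntegrable_and_integral_le_of_eqOn_rpow ha (sub_le_self T hx.1)
    (by linarith) (by linarith) (by positivity) h₁ h₂
  have e₁ : a ^ (2 * (δ - α)) * a ^ (2 * (α - 1 - δ) + 1) = a⁻¹ := by
    rw [← rpow_add ha, ← rpow_neg_one]; congr 1; ring
  have e₂ : a ^ (2 * (α - 1 - δ)) * a ^ (2 * (δ - α) + 1) = a⁻¹ := by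
    rw [← rpow_add ha, ← rpow_neg_one]; congr 1; ring
  calc ∫ y in Icc 0 T, contr T (fker T α t) (gker T α t) x y *
        contr T (fker T α t) (gker T α t) x y
      ≤ ∫ y in Icc 0 T, w (T - y) * w (T - y) := by
        refine integral_mono_of_nonneg (ae_of_all _ fun y => mul_self_nonneg _) ?_
          (ae_restrict_of_forall_mem measurableSet_Icc hw)
        exact (intervalIntegrable_iff_integrableOn_Icc_of_le hT).1
          (by simpa using (hint.comp_sub_left T).symm)
    _ = ∫ c in 0..T, w c * w c := by
        rw [integral_Icc_eq_integral_Ioc, ← intervalIntegral.integral_of_le hT,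
          intervalIntegral.integral_comp_sub_left (fun c => w c * w c), sub_self, sub_zero]
    _ ≤ _ := hle
    _ = R ^ 2 * (2 / (2 * α - 1 - 2 * δ)) * a⁻¹ := by
        rw [mul_assoc (R ^ 2), e₁, mul_assoc (R ^ 2), e₂,
          show 2 * (α - 1 - δ) + 1 = 2 * α - 1 - 2 * δ by ring,
          show -(2 * (δ - α) + 1) = 2 * α - 1 - 2 * δ by ring]
        ring

theorem normSq_contr_le (hα : 1 / 2 < α) (ht : 0 ≤ t) (htT : t < T) (hδ : 0 < δ)
    (hδα : 2 * δ < 2 * α - 1) :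
    normSq T (contr T (fker T α t) (gker T α t)) ≤
      ((1 / (2 * α - 1 - δ) + 1 / δ) / (2 * √(lam T α t) * |log (T - t)|)) ^ 2 *
        (2 / (2 * α - 1 - 2 * δ)) * (log T - log (T - t)) := by
  set C := ((1 / (2 * α - 1 - δ) + 1 / δ) / (2 * √(lam T α t) * |log (T - t)|)) ^ 2 *
    (2 / (2 * α - 1 - 2 * δ))
  have hT : 0 < T := by linarith
  have hsub : ∀ x ∈ Icc 0 t, 0 < T - x := fun x hx => by linarith [hx.2]
  have hint : IntegrableOn (fun x => C * (T - x)⁻¹) (Icc 0 t) :=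
    (continuousOn_const.mul ((continuousOn_const.sub continuousOn_id).inv₀ fun x hx =>
      (hsub x hx).ne')).integrableOn_compact isCompact_Icc
  have hbound : ∀ x ∈ Icc 0 T, ∫ y in Icc 0 T, contr T (fker T α t) (gker T α t) x y *
      contr T (fker T α t) (gker T α t) x y ≤ (Icc 0 t).indicator (fun x => C * (T - x)⁻¹) x := by
    intro x _
    by_cases hx : x ∈ Icc 0 t
    · rw [indicator_of_mem hx]
      exact integral_contr_mul_self_le hα htT hδ hδα hx
    · simp [indicator_of_notMem hx, contr_eq_zero_of_left_notMem hx]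
  have hlog : ∫ x in 0..t, (T - x)⁻¹ = log T - log (T - t) := by
    rw [intervalIntegral.integral_comp_sub_left (fun c => c⁻¹), sub_zero,
      integral_inv (by rw [uIcc_of_le (by linarith)]; exact fun h => (sub_pos.2 htT).not_ge h.1),
      log_div hT.ne' (by linarith)]
  calc normSq T (contr T (fker T α t) (gker T α t))
      ≤ ∫ x in Icc 0 T, (Icc 0 t).indicator (fun x => C * (T - x)⁻¹) x :=
        integral_mono_of_nonneg (ae_of_all _ fun x => integral_nonneg fun y => mul_self_nonneg _)
          ((hint.integrable_indicator measurableSet_Icc).integrableOn)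
          (ae_restrict_of_forall_mem measurableSet_Icc hbound)
    _ = C * (log T - log (T - t)) := by
        rw [setIntegral_indicator measurableSet_Icc,
          inter_eq_self_of_subset_right (Icc_subset_Icc le_rfl htT.le), integral_const_mul,
          integral_Icc_eq_integral_Ioc, ← intervalIntegral.integral_of_le ht, hlog]

end Contraction

theorem normSq_contr_le_sq_div_lam {T α t : ℝ} (hα : 1 / 2 < α) (ht : 0 ≤ t) (htT : t < T)
    (hL : 1 ≤ |log (T - t)|) :
    normSq T (contr T (fker T α t) (gker T α t)) ≤
      (16 * √(1 + |log T|) / (3 * (2 * α - 1) ^ 2) / lam T α t) ^ 2 := by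
  set β := 2 * α - 1 with hβ_def
  have hβ : 0 < β := by linarith
  have hL_eq : |log (T - t)| = β * lam T α t := by rw [lam, ← hβ_def]; field_simp
  have hlam : 0 < lam T α t := by rw [lam, ← hβ_def]; positivity
  have hlog : log T - log (T - t) ≤ (1 + |log T|) * |log (T - t)| := by
    have : |log T| ≤ |log T| * |log (T - t)| := le_mul_of_one_le_right (abs_nonneg _) hL
    linarith [le_abs_self (log T), neg_le_abs (log (T - t))]
  have hK : 1 / (β - β / 4) + 1 / (β / 4) = 16 / (3 * β) := by field_simp; ring
  have hM : 2 / (β - 2 * (β / 4)) = 4 / β := by field_simp; ring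
  have h := normSq_contr_le hα ht htT (δ := β / 4) (by positivity) (by linarith)
  rw [← hβ_def, hK, hM] at h
  calc normSq T (contr T (fker T α t) (gker T α t))
      ≤ (16 / (3 * β) / (2 * √(lam T α t) * |log (T - t)|)) ^ 2 * (4 / β) *
          ((1 + |log T|) * |log (T - t)|) := h.trans (by gcongr)
    _ = (16 * √(1 + |log T|) / (3 * β ^ 2) / lam T α t) ^ 2 := by
        have h1 : (0 : ℝ) ≤ 1 + |log T| := by positivity
        simp only [div_pow, mul_pow, sq_sqrt hlam.le, sq_sqrt h1]
        rw [hL_eq]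
        field_simp
        ring

theorem one_lt_abs_log {ε : ℝ} (hε : 0 < ε) (h : ε < 1 / exp 1) : 1 < |log ε| := by
  have : log ε < -1 := by
    simpa only [one_div, log_inv, log_exp] using log_lt_log hε h
  exact lt_abs.2 (Or.inr (by linarith))

theorem stmt_13_general (T α : ℝ) (hα : 1 / 2 < α) :
    ∃ C > 0, ∀ t : ℝ, max 0 (T - 1 / Real.exp 1) < t → t < T →
      Real.sqrt (normSq T (contr T (fker T α t) (gker T α t))) ≤ C / lam T α t := by
  have hβ : 0 < 2 * α - 1 := by linarith
  refine ⟨16 * √(1 + |log T|) / (3 * (2 * α - 1) ^ 2), by positivity, fun t ht₀ htT => ?_⟩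
  have ht : 0 ≤ t := (le_max_left _ _).trans ht₀.le
  have hL : 1 < |log (T - t)| :=
    one_lt_abs_log (by linarith) (by linarith [le_max_right 0 (T - 1 / exp 1)])
  have hlam : 0 < lam T α t := div_pos (by linarith) hβ
  rw [sqrt_le_left (by positivity)]
  exact normSq_contr_le_sq_div_lam hα ht htT hL.le

theorem stmt_13 (T α : ℝ) (hT : 0 < T) (hα : 1 / 2 < α) :
    ∃ C > 0, ∀ t : ℝ, max 0 (T - 1 / Real.exp 1) < t → t < T →
      Real.sqrt (normSq T (contr T (fker T α t) (gker T α t))) ≤ C / lam T α t :=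
  stmt_13_general T α hα
end
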